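/- The induced-subgraph relation on finite Σ-labeled graphs in which the length of every simple path is bounded by a fixed constant K is a well-quasi-order: every infinite sequence G_0, G_1, ... of such graphs contains indices i < j such that G_i is isomorphic to an induced subgraph of G_j with matching labels. -/

import Mathlib

/-!
A graph all of whose simple paths have length at most `K` has tree-depth at most `K + 1`: in a
connected such graph, removing any vertex `r` leaves components in each of which some neighbour of
`r` starts only paths of length less than `K`. Recursively, a labelled graph is thus described by a
finite tree of depth at most `K + 1`: the root's label, and the trees of the components of `G - r`,
where every vertex of `G - r` additionally records whether it is adjacent to `r`. These trees are
well-quasi-ordered (Higman's lemma, applied `K + 1` times), and a tree embedding yields an induced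
labelled embedding of the graphs: the pieces embed disjointly, and edges to the removed vertex are
preserved because they are part of the labels.
-/

/-- A finite Σ-labeled undirected graph. -/
structure LGraph (σ : Type) where
  V : Type
  fin : Fintype V
  G : SimpleGraph V
  label : V → σ

/-- `G₁ ⊑ G₂`: `G₁` is (isomorphic to) an induced labeled subgraph of `G₂`. -/
def LGraph.Ind {σ : Type} (G₁ G₂ : LGraph σ) : Prop :=
  ∃ φ : G₁.V → G₂.V, Function.Injective φ ∧
    (∀ v, G₂.label (φ v) = G₁.label v) ∧
    ∀ v w, G₁.G.Adj v w ↔ G₂.G.Adj (φ v) (φ w)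

theorem WellQuasiOrdered.sublistForall₂ {α : Type*} {r : α → α → Prop} [IsPreorder α r]
    (h : WellQuasiOrdered r) : WellQuasiOrdered (List.SublistForall₂ r) := by
  rw [← Set.partiallyWellOrderedOn_univ_iff] at h ⊢
  simpa using h.partiallyWellOrderedOn_sublistForall₂ r

/-- Rooted trees of depth less than `n`; the labels of the children of a node carry one more
proposition, which records adjacency to that node. -/
def Code : ℕ → Type → Type
  | 0, _ => Unit
  | n + 1, L => L × List (Code n (L × Prop))

namespace Code

def Le : (n : ℕ) → {L : Type} → Code n L → Code n L → Prop
  | 0, _, _, _ => True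
  | n + 1, _, c, d => c.1 = d.1 ∧ List.SublistForall₂ (Le n) c.2 d.2

instance isPreorder : ∀ (n : ℕ) (L : Type), IsPreorder (Code n L) (Le n)
  | 0, _ => { refl := fun _ => trivial, trans := fun _ _ _ _ _ => trivial }
  | n + 1, L =>
    have := isPreorder n (L × Prop)
    { refl := fun c => ⟨rfl, refl c.2⟩
      trans := fun _ _ _ h₁ h₂ => ⟨h₁.1.trans h₂.1, _root_.trans h₁.2 h₂.2⟩ }

theorem wellQuasiOrdered_le : ∀ (n : ℕ) {L : Type} [Finite L], WellQuasiOrdered (@Le n L)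
  | 0, _, _ => fun _ => ⟨0, 1, Nat.zero_lt_one, trivial⟩
  | n + 1, _, _ => (Finite.wellQuasiOrdered Eq).prod (wellQuasiOrdered_le n).sublistForall₂

end Code

namespace SimpleGraph

section Component

variable {V : Type*} (G : SimpleGraph V)

def componentIn (S : Set V) (v : V) : Set V :=
  {w | ∃ p : G.Walk v w, ∀ x ∈ p.support, x ∈ S}

variable {G} {S S' : Set V} {u v w : V}

theorem componentIn_subset : G.componentIn S v ⊆ S :=
  fun _ ⟨p, hp⟩ => hp _ p.end_mem_support

theorem mem_componentIn_self (hv : v ∈ S) : v ∈ G.componentIn S v :=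
  ⟨.nil, by simpa using hv⟩

theorem componentIn_mono (h : S ⊆ S') : G.componentIn S v ⊆ G.componentIn S' v :=
  fun _ ⟨p, hp⟩ => ⟨p, fun x hx => h (hp x hx)⟩

theorem mem_componentIn_comm (h : w ∈ G.componentIn S v) : v ∈ G.componentIn S w := by
  obtain ⟨p, hp⟩ := h
  exact ⟨p.reverse, by simpa using hp⟩

theorem mem_componentIn_trans (hw : w ∈ G.componentIn S v) (hu : u ∈ G.componentIn S w) :
    u ∈ G.componentIn S v := by
  obtain ⟨p, hp⟩ := hw
  obtain ⟨q, hq⟩ := hu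
  refine ⟨p.append q, fun x hx => ?_⟩
  rcases (p.mem_support_append_iff q).mp hx with hx | hx
  exacts [hp x hx, hq x hx]

theorem componentIn_eq_of_mem (h : w ∈ G.componentIn S v) :
    G.componentIn S w = G.componentIn S v :=
  Set.Subset.antisymm (fun _ hu => mem_componentIn_trans h hu)
    (fun _ hu => mem_componentIn_trans (mem_componentIn_comm h) hu)

theorem mem_componentIn_of_adj (hw : w ∈ G.componentIn S v) (hu : u ∈ S) (hadj : G.Adj w u) :
    u ∈ G.componentIn S v :=
  mem_componentIn_trans hw ⟨.cons hadj .nil, by simp [hu, componentIn_subset hw]⟩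

theorem support_subset_componentIn (p : G.Walk v w) (hp : ∀ x ∈ p.support, x ∈ S) :
    ∀ x ∈ p.support, x ∈ G.componentIn S v := by
  classical
  exact fun x hx => ⟨p.takeUntil x hx,
    fun y hy => hp y (p.support_takeUntil_subset_support hx hy)⟩

theorem componentIn_sdiff_componentIn (hu : u ∈ S \ G.componentIn S v) :
    G.componentIn (S \ G.componentIn S v) u = G.componentIn S u := by
  refine Set.Subset.antisymm (componentIn_mono Set.sdiff_subset) fun w ⟨p, hp⟩ =>
    ⟨p, fun x hx => ⟨hp x hx, fun hxv => hu.2 ?_⟩⟩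
  rw [← componentIn_eq_of_mem hxv]
  exact mem_componentIn_comm (support_subset_componentIn p hp x hx)

end Component

section Embedding

variable {V₁ V₂ L : Type*} (G₁ : SimpleGraph V₁) (G₂ : SimpleGraph V₂)

def EmbedsOn (lab₁ : V₁ → L) (lab₂ : V₂ → L) (S₁ : Set V₁) (S₂ : Set V₂) : Prop :=
  ∃ φ : G₁.induce S₁ ↪g G₂.induce S₂, ∀ x, lab₂ (φ x) = lab₁ x

variable {G₁ G₂} {lab₁ : V₁ → L} {lab₂ : V₂ → L} {S₁ T₁ : Set V₁} {S₂ T₂ : Set V₂}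

theorem embedsOn_empty : G₁.EmbedsOn G₂ lab₁ lab₂ ∅ S₂ :=
  ⟨{ toFun := fun x => x.2.elim, inj' := fun x => x.2.elim, map_rel_iff' := fun {x} => x.2.elim },
    fun x => x.2.elim⟩

theorem EmbedsOn.mono_right (h : G₁.EmbedsOn G₂ lab₁ lab₂ S₁ T₂) (hT : T₂ ⊆ S₂) :
    G₁.EmbedsOn G₂ lab₁ lab₂ S₁ S₂ :=
  let ⟨φ, hφ⟩ := h
  ⟨φ.trans (G₂.induceHomOfLE hT), hφ⟩

theorem EmbedsOn.glue (hT₁ : T₁ ⊆ S₁) (hT₂ : T₂ ⊆ S₂)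
    (φ : G₁.induce T₁ ↪g G₂.induce T₂) (hφ : ∀ x, lab₂ (φ x) = lab₁ x)
    (ψ : G₁.induce (S₁ \ T₁) ↪g G₂.induce (S₂ \ T₂)) (hψ : ∀ x, lab₂ (ψ x) = lab₁ x)
    (hcross : ∀ x y, G₁.Adj x.1 y.1 ↔ G₂.Adj (φ x) (ψ y)) :
    G₁.EmbedsOn G₂ lab₁ lab₂ S₁ S₂ := by
  classical
  let F : S₁ → S₂ := fun x =>
    if h : x.1 ∈ T₁ then Set.inclusion hT₂ (φ ⟨x, h⟩)
    else Set.inclusion Set.sdiff_subset (ψ ⟨x, x.2, h⟩)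
  have hFφ : ∀ a, F (Set.inclusion hT₁ a) = Set.inclusion hT₂ (φ a) := fun a => by
    simp [F, a.2]
  have hFψ : ∀ b, F (Set.inclusion Set.sdiff_subset b) = Set.inclusion Set.sdiff_subset (ψ b) :=
    fun b => by simp [F, b.2.2]
  have hsplit : ∀ x : S₁, (∃ a, x = Set.inclusion hT₁ a) ∨
      ∃ b, x = Set.inclusion Set.sdiff_subset b := fun x => by
    by_cases h : x.1 ∈ T₁
    exacts [.inl ⟨⟨x, h⟩, rfl⟩, .inr ⟨⟨x, x.2, h⟩, rfl⟩]
  have hinj : Function.Injective F := by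
    intro x y hxy
    rcases hsplit x with ⟨a, rfl⟩ | ⟨b, rfl⟩ <;> rcases hsplit y with ⟨a', rfl⟩ | ⟨b', rfl⟩ <;>
      simp only [hFφ, hFψ, Subtype.ext_iff] at hxy ⊢
    · exact congrArg _ (φ.injective (Subtype.ext hxy))
    · exact absurd ((φ a).2) (hxy ▸ (ψ b').2.2)
    · exact absurd ((φ a').2) (hxy ▸ (ψ b).2.2)
    · exact congrArg _ (ψ.injective (Subtype.ext hxy))
  refine ⟨⟨⟨F, hinj⟩, fun {x y} => ?_⟩, fun x => ?_⟩
  · rcases hsplit x with ⟨a, rfl⟩ | ⟨b, rfl⟩ <;> rcases hsplit y with ⟨a', rfl⟩ | ⟨b', rfl⟩ <;>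
      simp only [Function.Embedding.coeFn_mk, hFφ, hFψ, induce_adj]
    · exact φ.map_adj_iff
    · exact (hcross a b').symm
    · rw [G₁.adj_comm, G₂.adj_comm]; exact (hcross a' b).symm
    · exact ψ.map_adj_iff
  · rcases hsplit x with ⟨a, rfl⟩ | ⟨b, rfl⟩
    · simpa [hFφ] using hφ a
    · simpa [hFψ] using hψ b

theorem EmbedsOn.union_of_separated (hT₁ : T₁ ⊆ S₁) (hT₂ : T₂ ⊆ S₂)
    (hsep₁ : ∀ a ∈ T₁, ∀ b ∈ S₁ \ T₁, ¬G₁.Adj a b) (hsep₂ : ∀ a ∈ T₂, ∀ b ∈ S₂ \ T₂, ¬G₂.Adj a b)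
    (hT : G₁.EmbedsOn G₂ lab₁ lab₂ T₁ T₂)
    (hS : G₁.EmbedsOn G₂ lab₁ lab₂ (S₁ \ T₁) (S₂ \ T₂)) : G₁.EmbedsOn G₂ lab₁ lab₂ S₁ S₂ :=
  let ⟨φ, hφ⟩ := hT
  let ⟨ψ, hψ⟩ := hS
  .glue hT₁ hT₂ φ hφ ψ hψ fun x y =>
    iff_of_false (hsep₁ _ x.2 _ y.2) (hsep₂ _ (φ x).2 _ (ψ y).2)

theorem EmbedsOn.insert_root {r₁ : V₁} {r₂ : V₂} (hr₁ : r₁ ∈ S₁) (hr₂ : r₂ ∈ S₂)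
    (hr : lab₂ r₂ = lab₁ r₁)
    (h : G₁.EmbedsOn G₂ (fun v => (lab₁ v, G₁.Adj r₁ v)) (fun v => (lab₂ v, G₂.Adj r₂ v))
      (S₁ \ {r₁}) (S₂ \ {r₂})) : G₁.EmbedsOn G₂ lab₁ lab₂ S₁ S₂ := by
  obtain ⟨ψ, hψ⟩ := h
  let φ : G₁.induce {r₁} ↪g G₂.induce {r₂} :=
    { toFun := fun _ => ⟨r₂, rfl⟩
      inj' := fun x y _ => Subsingleton.elim x y
      map_rel_iff' := fun {x y} => by simp [Subsingleton.elim x y] }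
  refine .glue (Set.singleton_subset_iff.mpr hr₁) (Set.singleton_subset_iff.mpr hr₂) φ
    (fun x => by rw [x.2]; exact hr) ψ (fun x => congrArg Prod.fst (hψ x)) fun x y => ?_
  rw [x.2]
  exact (congrArg Prod.snd (hψ y)).to_iff.symm

end Embedding

section Encoding

variable {V : Type*} (G : SimpleGraph V)

def SplitsInto {C : Type*} (P : Set V → C → Prop) : Set V → List C → Prop
  | S, [] => S = ∅
  | S, c :: cs => ∃ T ⊆ S, P T c ∧ (∀ a ∈ T, ∀ b ∈ S \ T, ¬G.Adj a b) ∧ SplitsInto P (S \ T) cs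

def Encodes : (n : ℕ) → {L : Type} → (V → L) → Set V → Code n L → Prop
  | 0, _, _, S, _ => S = ∅
  | n + 1, _, lab, S, c =>
    ∃ r ∈ S, lab r = c.1 ∧ G.SplitsInto (Encodes n fun v => (lab v, G.Adj r v)) (S \ {r}) c.2

end Encoding

section Embedding

variable {V₁ V₂ : Type*} {G₁ : SimpleGraph V₁} {G₂ : SimpleGraph V₂}

theorem SplitsInto.embedsOn {L C₁ C₂ : Type*} {lab₁ : V₁ → L} {lab₂ : V₂ → L}
    {P₁ : Set V₁ → C₁ → Prop} {P₂ : Set V₂ → C₂ → Prop} {R : C₁ → C₂ → Prop}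
    (hP : ∀ T₁ T₂ c₁ c₂, P₁ T₁ c₁ → P₂ T₂ c₂ → R c₁ c₂ → G₁.EmbedsOn G₂ lab₁ lab₂ T₁ T₂)
    {cs₁ : List C₁} {cs₂ : List C₂} (hR : List.SublistForall₂ R cs₁ cs₂) :
    ∀ {S₁ S₂}, G₁.SplitsInto P₁ S₁ cs₁ → G₂.SplitsInto P₂ S₂ cs₂ →
      G₁.EmbedsOn G₂ lab₁ lab₂ S₁ S₂ := by
  induction hR with
  | nil => rintro S₁ S₂ rfl -; exact embedsOn_empty
  | cons hc _ ih =>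
    rintro S₁ S₂ ⟨T₁, hT₁, hP₁, hsep₁, hrest₁⟩ ⟨T₂, hT₂, hP₂, hsep₂, hrest₂⟩
    exact .union_of_separated hT₁ hT₂ hsep₁ hsep₂ (hP _ _ _ _ hP₁ hP₂ hc) (ih hrest₁ hrest₂)
  | cons_right _ ih =>
    rintro S₁ S₂ h₁ ⟨T₂, -, -, -, hrest₂⟩
    exact (ih h₁ hrest₂).mono_right Set.sdiff_subset

theorem Encodes.embedsOn : ∀ (n : ℕ) {L : Type} {lab₁ : V₁ → L} {lab₂ : V₂ → L} {S₁ S₂}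
    {c₁ c₂ : Code n L}, G₁.Encodes n lab₁ S₁ c₁ → G₂.Encodes n lab₂ S₂ c₂ → Code.Le n c₁ c₂ →
      G₁.EmbedsOn G₂ lab₁ lab₂ S₁ S₂
  | 0, _, _, _, _, _, _, _, h₁, _, _ => h₁ ▸ embedsOn_empty
  | n + 1, _, _, _, _, _, _, _, ⟨r₁, hr₁, hc₁, h₁⟩, ⟨r₂, hr₂, hc₂, h₂⟩, ⟨hroot, hchildren⟩ =>
    .insert_root hr₁ hr₂ (by rw [hc₁, hc₂, hroot])
      (SplitsInto.embedsOn (fun _ _ _ _ => Encodes.embedsOn n) hchildren h₁ h₂)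

end Embedding

section Existence

variable {V : Type*} {G : SimpleGraph V}

theorem exists_splitsInto [Finite V] {C : Type*} {P : Set V → C → Prop} (S : Set V)
    (h : ∀ v ∈ S, ∃ c, P (G.componentIn S v) c) : ∃ cs, G.SplitsInto P S cs := by
  induction S using WellFoundedLT.induction with
  | _ S ih =>
    rcases S.eq_empty_or_nonempty with rfl | ⟨v, hv⟩
    · exact ⟨[], rfl⟩
    obtain ⟨c, hc⟩ := h v hv
    have hsub : S \ G.componentIn S v ⊂ S :=
      Set.sdiff_ssubset_left_iff.mpr ⟨v, hv, mem_componentIn_self hv⟩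
    obtain ⟨cs, hcs⟩ := ih _ hsub fun u hu => by
      rw [componentIn_sdiff_componentIn hu]
      exact h u hu.1
    exact ⟨c :: cs, _, componentIn_subset, hc,
      fun a ha b hb hab => hb.2 (mem_componentIn_of_adj ha hb.1 hab), hcs⟩

theorem exists_adj_mem_componentIn_sdiff {S : Set V} {r v : V} (hv : v ∈ G.componentIn S r)
    (hvr : v ≠ r) : ∃ b, G.Adj r b ∧ v ∈ G.componentIn (G.componentIn S r \ {r}) b := by
  classical
  obtain ⟨p, hp⟩ := hv
  have hq : ∀ x ∈ p.bypass.support, x ∈ S := fun x hx => hp x (p.support_bypass_subset_support hx)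
  obtain ⟨b, hadj, q, hpq⟩ := Walk.exists_eq_cons_of_ne hvr.symm p.bypass
  have hpath := p.bypass_isPath
  rw [hpq, Walk.cons_isPath_iff] at hpath
  refine ⟨b, hadj, q, fun x hx => ⟨?_, fun hxr => hpath.2 (hxr ▸ hx)⟩⟩
  exact support_subset_componentIn _ hq x (by rw [hpq]; exact List.mem_cons_of_mem _ hx)

theorem exists_encodes [Finite V] : ∀ (n : ℕ) {L : Type} (lab : V → L) (S : Set V) {r : V},
    r ∈ S → (∀ v (p : G.Walk r v), p.IsPath → (∀ x ∈ p.support, x ∈ S) → p.length < n) →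
      ∃ c, G.Encodes n lab (G.componentIn S r) c
  | 0, _, _, _, r, hr, hshort => absurd (hshort r .nil .nil (by simpa using hr)) (by simp)
  | n + 1, _, lab, S, r, hr, hshort => by
    obtain ⟨cs, hcs⟩ := exists_splitsInto (P := G.Encodes n fun v => (lab v, G.Adj r v))
      (G.componentIn S r \ {r}) fun v hv => by
        obtain ⟨b, hadj, hvb⟩ := exists_adj_mem_componentIn_sdiff hv.1 hv.2
        have hb := componentIn_subset (mem_componentIn_comm hvb)
        rw [componentIn_eq_of_mem hvb]
        refine exists_encodes n _ _ hb fun w p hp hpS => ?_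
        have hpS' : ∀ x ∈ (p.cons hadj).support, x ∈ S := by
          simp only [Walk.support_cons, List.forall_mem_cons]
          exact ⟨hr, fun x hx => componentIn_subset (hpS x hx).1⟩
        simpa using hshort w (p.cons hadj) (hp.cons fun hr => (hpS r hr).2 rfl) hpS'
    exact ⟨(lab r, cs), r, mem_componentIn_self hr, rfl, hcs⟩

end Existence

end SimpleGraph

theorem LGraph.ind_of_embedsOn_univ {σ : Type} {G₁ G₂ : LGraph σ}
    (h : G₁.G.EmbedsOn G₂.G G₁.label G₂.label Set.univ Set.univ) : G₁.Ind G₂ :=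
  let ⟨φ, hφ⟩ := h
  ⟨fun v => φ ⟨v, trivial⟩, fun _ _ h => congrArg Subtype.val (φ.injective (Subtype.ext h)),
    fun _ => hφ _, fun v w => (φ.map_adj_iff (v := ⟨v, trivial⟩) (w := ⟨w, trivial⟩)).symm⟩

/-- The induced-subgraph relation on finite Σ-labeled graphs in which every simple path has
length at most `K` is a well-quasi-order. -/
theorem stmt5 (σ : Type) [Finite σ] (K : ℕ) (f : ℕ → LGraph σ)
    (hp : ∀ n, ∀ ⦃u v : (f n).V⦄ (p : (f n).G.Walk u v), p.IsPath → p.length ≤ K) :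
    ∃ i j, i < j ∧ (f i).Ind (f j) := by
  have hsplit : ∀ n, ∃ cs, (f n).G.SplitsInto ((f n).G.Encodes (K + 1) (f n).label) Set.univ cs :=
    fun n =>
      have := (f n).fin
      SimpleGraph.exists_splitsInto _ fun v _ => SimpleGraph.exists_encodes (K + 1) _ _
        (Set.mem_univ v) fun _ p hpath _ => Nat.lt_succ_of_le (hp n p hpath)
  choose cs hcs using hsplit
  obtain ⟨i, j, hij, hle⟩ := (Code.wellQuasiOrdered_le (K + 1) (L := σ)).sublistForall₂ cs
  exact ⟨i, j, hij, LGraph.ind_of_embedsOn_univ <|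
    SimpleGraph.SplitsInto.embedsOn (fun _ _ _ _ => SimpleGraph.Encodes.embedsOn (K + 1))
      hle (hcs i) (hcs j)⟩
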